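/- For every integer k ≥ 3, the modified instance I_k(1) in which every commodity has unit demand (d_i = 1 for all i = 0,…,k−1) admits a multi-commodity flow over time without intermediate storage with time horizon T = k. Concretely, sending flow of each commodity i at rate 1 into arc a_{(i+m) mod k} during the time interval [m, m+1) for m = 0,…,k−2 (and rate 0 otherwise) is feasible with horizon k. -/

import Mathlib

/-!
Commodity `i` enters arc `a_j` only during the unit slot `[s, s + 1)`, where `s = (j - i) mod k`
is the `flowSlot`, and not at all when `s = k - 1`. The arc entering `v_m` carries commodity `i`
one slot earlier than the arc leaving `v_m`, so with unit transit times every unit of flow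
leaves an intermediate node at the instant it arrives: there is no storage, and the only node
where flow accumulates is the sink, whose outgoing arc would have slot `k - 1`. At a time `θ`
the slot is `⌊θ⌋`, which together with the arc determines the commodity; hence each arc carries
at most one commodity at a time and the capacities hold.
-/

open MeasureTheory Set

/-- A multi-commodity flow over time with time horizon `T` for the cycle instance with `k` nodes
`v_0, …, v_{k-1}`, arcs `a_j = (v_j, v_{(j+1) % k})` of unit capacity and unit transit time,
`k` commodities where commodity `i` has source `v_i`, sink `v_{(i-1) % k}` and demand `d i`.
`f i j` is the flow rate function of commodity `i` into arc `a_j`. -/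
def IsMCFlow (k : ℕ) (T : ℝ) (d : ℕ → ℝ) (f : ℕ → ℕ → ℝ → ℝ) : Prop :=
  -- positive time horizon
  0 < T ∧
  -- integrable flow rate functions
  (∀ i < k, ∀ j < k, Integrable (f i j)) ∧
  -- nonnegative flow rates
  (∀ i < k, ∀ j < k, ∀ θ : ℝ, 0 ≤ f i j θ) ∧
  -- flow rates vanish outside [0, T)
  (∀ i < k, ∀ j < k, ∀ θ : ℝ, θ ∉ Ico (0 : ℝ) T → f i j θ = 0) ∧
  -- capacity constraints, for almost every time
  (∀ j < k, ∀ᵐ θ : ℝ, ∑ i ∈ Finset.range k, f i j θ ≤ 1) ∧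
  -- weak flow conservation: flow can only emerge from the source `v_i` of commodity `i`;
  -- node `v_m` has unique incoming arc `a_{(m-1) % k}` and unique outgoing arc `a_m`
  (∀ i < k, ∀ m < k, m ≠ i → ∀ θ ∈ Ico (0 : ℝ) T,
    0 ≤ (∫ ξ in (0 : ℝ)..(θ - 1), f i ((m + k - 1) % k) ξ) -
        ∫ ξ in (0 : ℝ)..θ, f i m ξ) ∧
  -- demands are fulfilled at time `T`
  (∀ i < k, ∀ m < k,
    (∫ ξ in (0 : ℝ)..(T - 1), f i ((m + k - 1) % k) ξ) -
        (∫ ξ in (0 : ℝ)..T, f i m ξ) =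
      if m = (i + k - 1) % k then d i
      else if m = i then -d i
      else 0)

/-- The flow is without intermediate storage: flow conservation holds with equality at every
node other than the source `v_i` and the sink `v_{(i-1) % k}` of each commodity `i`. -/
def NoStorage (k : ℕ) (T : ℝ) (f : ℕ → ℕ → ℝ → ℝ) : Prop :=
  ∀ i < k, ∀ m < k, m ≠ i → m ≠ (i + k - 1) % k → ∀ θ ∈ Ico (0 : ℝ) T,
    (∫ ξ in (0 : ℝ)..(θ - 1), f i ((m + k - 1) % k) ξ) =
      ∫ ξ in (0 : ℝ)..θ, f i m ξ

/-- The demands of the instance `I_k`: commodity `0` has demand `2`,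
all other commodities have demand `1`. -/
noncomputable def demandI (i : ℕ) : ℝ := if i = 0 then 2 else 1

open Classical in
/-- The explicit flow for the unit-demand instance `I_k(1)`: commodity `i` sends flow at
rate `1` into arc `a_{(i+m) % k}` during the time interval `[m, m + 1)` for
`m = 0, …, k - 2`, and at rate `0` otherwise. -/
noncomputable def flowUnit (k i j : ℕ) (θ : ℝ) : ℝ :=
  if ∃ m : ℕ, m < k - 1 ∧ j = (i + m) % k ∧ (m : ℝ) ≤ θ ∧ θ < (m : ℝ) + 1 then 1 else 0

theorem volume_real_Ico_inter_Ioc (a b x y : ℝ) :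
    volume.real (Ico a b ∩ Ioc x y) = max (min b y - max a x) 0 := by
  rw [measureReal_congr ((Ico_ae_eq_Ioc (μ := volume)).inter (ae_eq_refl (Ioc x y))),
    Ioc_inter_Ioc, Real.volume_real_Ioc]

theorem intervalIntegral_indicator_Ico_one (a b x y : ℝ) :
    ∫ ξ in x..y, (Ico a b).indicator 1 ξ =
      max (min b y - max a x) 0 - max (min b x - max a y) 0 := by
  rw [intervalIntegral, integral_indicator_one measurableSet_Ico,
    integral_indicator_one measurableSet_Ico, measureReal_restrict_apply measurableSet_Ico,
    measureReal_restrict_apply measurableSet_Ico, volume_real_Ico_inter_Ioc,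
    volume_real_Ico_inter_Ioc]

theorem intervalIntegral_indicator_Ico_one_of_nonneg {a : ℝ} (ha : 0 ≤ a) (b θ : ℝ) :
    ∫ ξ in (0 : ℝ)..θ, (Ico a b).indicator 1 ξ = max (min b θ - a) 0 := by
  have h : min b 0 - max a θ ≤ 0 := by linarith [min_le_right b 0, le_max_left a θ]
  rw [intervalIntegral_indicator_Ico_one, max_eq_left ha, max_eq_right h, sub_zero]

theorem mod_eq_self_or_mod_eq_sub_of_lt_two_mul {k a : ℕ} (h : a < 2 * k) :
    (a < k ∧ a % k = a) ∨ (k ≤ a ∧ a % k = a - k) := by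
  rcases lt_or_ge a k with ha | ha
  · exact Or.inl ⟨ha, Nat.mod_eq_of_lt ha⟩
  · exact Or.inr ⟨ha, by rw [Nat.mod_eq_sub_mod ha, Nat.mod_eq_of_lt (by omega)]⟩

-- `(j + k - i) % k` is `(j - i) mod k`, avoiding truncated subtraction in `ℕ`.
def flowSlot (k i j : ℕ) : ℕ := (j + k - i) % k

section FlowSlot

variable {k i j m : ℕ}

theorem add_mod_eq_iff_eq_flowSlot (hi : i < k) (hj : j < k) (hm : m < k) :
    j = (i + m) % k ↔ m = flowSlot k i j := by
  unfold flowSlot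
  rcases mod_eq_self_or_mod_eq_sub_of_lt_two_mul (k := k) (a := i + m) (by omega) with h | h <;>
    rcases mod_eq_self_or_mod_eq_sub_of_lt_two_mul (k := k) (a := j + k - i) (by omega)
      with h' | h' <;> omega

theorem flowSlot_self : flowSlot k i i = 0 := by
  rw [flowSlot, Nat.add_sub_cancel_left, Nat.mod_self]

theorem flowSlot_pred_add_one (hi : i < k) (hm : m < k) (hmi : m ≠ i) :
    flowSlot k i ((m + k - 1) % k) + 1 = flowSlot k i m := by
  unfold flowSlot
  rcases mod_eq_self_or_mod_eq_sub_of_lt_two_mul (k := k) (a := m + k - 1) (by omega) with h | h <;>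
    rcases mod_eq_self_or_mod_eq_sub_of_lt_two_mul (k := k) (a := m + k - i) (by omega)
      with h' | h' <;>
    rcases mod_eq_self_or_mod_eq_sub_of_lt_two_mul (k := k) (a := (m + k - 1) % k + k - i)
      (by omega) with h'' | h'' <;> omega

theorem flowSlot_eq_sub_one_iff (hi : i < k) (hm : m < k) :
    flowSlot k i m = k - 1 ↔ m = (i + k - 1) % k := by
  unfold flowSlot
  rcases mod_eq_self_or_mod_eq_sub_of_lt_two_mul (k := k) (a := i + k - 1) (by omega) with h | h <;>
    rcases mod_eq_self_or_mod_eq_sub_of_lt_two_mul (k := k) (a := m + k - i) (by omega)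
      with h' | h' <;> omega

end FlowSlot

section FlowUnit

variable {k i j : ℕ}

theorem flowUnit_nonneg (θ : ℝ) : 0 ≤ flowUnit k i j θ := by
  unfold flowUnit; split_ifs <;> norm_num

theorem flowUnit_le_one (θ : ℝ) : flowUnit k i j θ ≤ 1 := by
  unfold flowUnit; split_ifs <;> norm_num

theorem flowUnit_eq_zero_of_notMem_Ico (θ : ℝ) (hθ : θ ∉ Ico (0 : ℝ) (k - 1)) :
    flowUnit k i j θ = 0 := by
  rw [flowUnit, if_neg]
  rintro ⟨m, hm, -, hmθ, hθm⟩
  have hlast : (m : ℝ) + 1 ≤ k - 1 := by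
    rw [le_sub_iff_add_le]; exact_mod_cast (by omega : m + 1 + 1 ≤ k)
  exact hθ ⟨(Nat.cast_nonneg m).trans hmθ, by linarith⟩

theorem eq_add_floor_mod_of_flowUnit_ne_zero {θ : ℝ} (h : flowUnit k i j θ ≠ 0) :
    j = (i + ⌊θ⌋₊) % k := by
  by_contra hj
  refine h (if_neg ?_)
  rintro ⟨m, -, rfl, hmθ, hθm⟩
  exact hj (by rw [Nat.floor_eq_on_Ico m θ ⟨hmθ, hθm⟩])

theorem eq_of_flowUnit_ne_zero {i' : ℕ} (hi : i < k) (hi' : i' < k) {θ : ℝ}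
    (h : flowUnit k i j θ ≠ 0) (h' : flowUnit k i' j θ ≠ 0) : i = i' := by
  have hmod : i + ⌊θ⌋₊ ≡ i' + ⌊θ⌋₊ [MOD k] :=
    (eq_add_floor_mod_of_flowUnit_ne_zero h).symm.trans (eq_add_floor_mod_of_flowUnit_ne_zero h')
  exact (Nat.ModEq.add_right_cancel' _ hmod).eq_of_lt_of_lt hi hi'

theorem sum_flowUnit_le_one (θ : ℝ) : ∑ i ∈ Finset.range k, flowUnit k i j θ ≤ 1 := by
  by_cases hsupp : ∃ i ∈ Finset.range k, flowUnit k i j θ ≠ 0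
  · obtain ⟨i, hi, hne⟩ := hsupp
    rw [Finset.sum_eq_single_of_mem i hi fun i' hi' hne' => by_contra fun h' =>
      hne' (eq_of_flowUnit_ne_zero (Finset.mem_range.1 hi') (Finset.mem_range.1 hi) h' hne)]
    exact flowUnit_le_one θ
  · push Not at hsupp
    rw [Finset.sum_eq_zero hsupp]
    exact zero_le_one

theorem flowUnit_eq_indicator (hi : i < k) (hj : j < k) :
    flowUnit k i j = if flowSlot k i j < k - 1 then
      (Ico (flowSlot k i j : ℝ) (flowSlot k i j + 1)).indicator 1 else 0 := by
  ext θ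
  have hsupp : (∃ m : ℕ, m < k - 1 ∧ j = (i + m) % k ∧ (m : ℝ) ≤ θ ∧ θ < m + 1) ↔
      flowSlot k i j < k - 1 ∧ θ ∈ Ico (flowSlot k i j : ℝ) (flowSlot k i j + 1) := by
    constructor
    · rintro ⟨m, hm, hjm, hθ⟩
      rw [add_mod_eq_iff_eq_flowSlot hi hj (by omega)] at hjm
      exact hjm ▸ ⟨hm, hθ⟩
    · rintro ⟨hs, hθ⟩
      exact ⟨_, hs, (add_mod_eq_iff_eq_flowSlot hi hj (by omega)).2 rfl, hθ⟩
  rw [flowUnit, if_congr hsupp rfl rfl]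
  split_ifs <;> simp_all

theorem integrable_flowUnit (hi : i < k) (hj : j < k) : Integrable (flowUnit k i j) := by
  rw [flowUnit_eq_indicator hi hj]
  split_ifs
  · exact (integrable_indicator_iff measurableSet_Ico).2 (integrableOn_const (by simp))
  · exact integrable_zero _ _ _

theorem intervalIntegral_flowUnit (hi : i < k) (hj : j < k) (θ : ℝ) :
    ∫ ξ in (0 : ℝ)..θ, flowUnit k i j ξ =
      if flowSlot k i j < k - 1 then max (min (θ - flowSlot k i j) 1) 0 else 0 := by
  rw [flowUnit_eq_indicator hi hj]
  split_ifs
  · rw [intervalIntegral_indicator_Ico_one_of_nonneg (Nat.cast_nonneg _), ← min_sub_sub_right,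
      add_sub_cancel_left, min_comm]
  · simp

end FlowUnit

section NetInflow

variable {k i m : ℕ}

theorem self_ne_add_sub_one_mod (hk : 2 ≤ k) (hi : i < k) : i ≠ (i + k - 1) % k := fun h => by
  have hslot := (flowSlot_eq_sub_one_iff hi hi).2 h
  rw [flowSlot_self] at hslot
  omega

theorem netInflow_flowUnit (hi : i < k) (hm : m < k) (hmi : m ≠ i) (θ : ℝ) :
    (∫ ξ in (0 : ℝ)..(θ - 1), flowUnit k i ((m + k - 1) % k) ξ) -
        ∫ ξ in (0 : ℝ)..θ, flowUnit k i m ξ =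
      if m = (i + k - 1) % k then max (min (θ - (k - 1)) 1) 0 else 0 := by
  have hpred := flowSlot_pred_add_one hi hm hmi
  have hlt : flowSlot k i m < k := Nat.mod_lt _ (by omega)
  have hshift : θ - 1 - (flowSlot k i ((m + k - 1) % k) : ℝ) = θ - flowSlot k i m := by
    rw [← hpred]; push_cast; ring
  rw [intervalIntegral_flowUnit hi (Nat.mod_lt _ (by omega)), intervalIntegral_flowUnit hi hm,
    if_pos (by omega), hshift]
  by_cases hsink : m = (i + k - 1) % k
  · have hslot := (flowSlot_eq_sub_one_iff hi hm).2 hsink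
    rw [if_pos hsink, hslot, if_neg (lt_irrefl _), sub_zero, Nat.cast_pred (by omega)]
  · have hslot : flowSlot k i m ≠ k - 1 := mt (flowSlot_eq_sub_one_iff hi hm).1 hsink
    rw [if_pos (by omega), if_neg hsink, sub_self]

theorem netInflow_flowUnit_self (hk : 2 ≤ k) (hi : i < k) (θ : ℝ) :
    (∫ ξ in (0 : ℝ)..(θ - 1), flowUnit k i ((i + k - 1) % k) ξ) -
        ∫ ξ in (0 : ℝ)..θ, flowUnit k i i ξ = -max (min θ 1) 0 := by
  have hsink : (i + k - 1) % k < k := Nat.mod_lt _ (by omega)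
  rw [intervalIntegral_flowUnit hi hsink, intervalIntegral_flowUnit hi hi,
    (flowSlot_eq_sub_one_iff hi hsink).2 rfl, flowSlot_self, if_neg (lt_irrefl _),
    if_pos (by omega), Nat.cast_zero, sub_zero, zero_sub]

end NetInflow

/-- For every `k ≥ 3`, the modified instance `I_k(1)` with unit demands for all commodities
admits a multi-commodity flow over time without intermediate storage with time horizon `k`;
concretely, the explicit flow `flowUnit k` is feasible with horizon `k` and uses no storage. -/
theorem unit_demand_no_storage_horizon_k (k : ℕ) (hk : 3 ≤ k) :
    IsMCFlow k (k : ℝ) (fun _ => 1) (flowUnit k) ∧ NoStorage k (k : ℝ) (flowUnit k) := by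
  refine ⟨⟨by positivity, fun i hi j hj => integrable_flowUnit hi hj,
    fun _ _ _ _ => flowUnit_nonneg, fun _ _ _ _ θ hθ => flowUnit_eq_zero_of_notMem_Ico θ ?_,
    fun _ _ => Filter.Eventually.of_forall sum_flowUnit_le_one, ?_, ?_⟩, ?_⟩
  · exact fun h => hθ (Ico_subset_Ico_right (by linarith) h)
  · intro i hi m hm hmi θ _
    rw [netInflow_flowUnit hi hm hmi]
    split_ifs
    exacts [le_max_right _ _, le_rfl]
  · intro i hi m hm
    by_cases hmi : m = i
    · subst hmi
      rw [netInflow_flowUnit_self (by omega) hi, if_neg (self_ne_add_sub_one_mod (by omega) hi),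
        if_pos rfl]
      norm_num
      omega
    · rw [netInflow_flowUnit hi hm hmi, if_neg hmi]
      split_ifs <;> norm_num
  · intro i hi m hm hmi hsink θ _
    rw [← sub_eq_zero, netInflow_flowUnit hi hm hmi, if_neg hsink]
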